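/- arXiv:2303.15019 — 5 statements merged into one kernel-verified Lean document; each statement's English description precedes it below -/
import Mathlib

section
/- Let n ≥ 1 and let E, F, P, Q, X, Y, W, V be real n×n matrices satisfying the pencil relations E = (I − Q X) W, X − P = F X W, E Y V = Y − Q, and (I − P Y) V = F (i.e. M [I; X] = N [I; X] W and M [Y; I] V = N [Y; I] for the 2n×2n block matrices M = [[E, 0], [−P, I]] and N = [[I, −Q], [0, F]]). Assume ρ(W) ≤ 1, ρ(V) ≤ 1 and ρ(W)·ρ(V) < 1. Suppose (E_k, F_k, P_k, Q_k)_{k≥0} are sequences of real n×n matrices with E₀ = E, F₀ = F, P₀ = P, Q₀ = Q such that for every k the matrices I − Q_k P_k and I − P_k Q_k are invertible and E_{k+1} = E_k (I − Q_k P_k)⁻¹ E_k, P_{k+1} = P_k + F_k (I − P_k Q_k)⁻¹ P_k E_k, F_{k+1} = F_k (I − P_k Q_k)⁻¹ F_k, Q_{k+1} = Q_k + E_k (I − Q_k P_k)⁻¹ Q_k F_k. Then limsup_{k→∞} ‖X − P_k‖^{1/2^k} ≤ ρ(W)·ρ(V) and limsup_{k→∞} ‖Y − Q_k‖^{1/2^k}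 ≤ ρ(W)·ρ(V). -/
/-!
The doubling step preserves the pencil relations with `W`, `V` replaced by their squares (a
noncommutative ring identity), so after `k` steps `X - P_k = F_k X W^(2^k)` and
`F_k = (I - P_k Y) V^(2^k)`, i.e. `X - P_k = (I - P_k Y) V^(2^k) X W^(2^k)`. Writing
`I - P_k Y = (I - X Y) + (X - P_k) Y` and using `‖W^m‖ ≤ C (ρ(W) + ε)^m`, `‖V^m‖ ≤ C (ρ(V) + ε)^m`
gives `‖X - P_k‖ ≤ (a + c ‖X - P_k‖) K s^(2^k)` with `s = (ρ(W) + ε)(ρ(V) + ε) < 1`; for large `k`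
the second term is absorbed, so `‖X - P_k‖ = O(s^(2^k))`. Exchanging the roles of `(E, P, X, W)`
and `(F, Q, Y, V)` turns the recursion and the pencil relations into themselves, which gives the
bound for `Y - Q_k`.
-/

attribute [local instance] Matrix.linftyOpNormedRing Matrix.linftyOpNormedAlgebra

open Filter

variable {n : ℕ}

/-- The spectral radius of a real `n × n` matrix, with respect to the operator norm
`‖M‖ = max_i ∑_j |M i j|` induced by the supremum norm on `ℝⁿ`: it is
`ρ(M) = lim_{m → ∞} ‖M ^ m‖ ^ (1/m)`, which (by submultiplicativity of the norm,
via Fekete's lemma) equals `inf_{m ≥ 1} ‖M ^ m‖ ^ (1/m)`. -/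
noncomputable def specRad (M : Matrix (Fin n) (Fin n) ℝ) : ℝ :=
  ⨅ m : ℕ, ‖M ^ (m + 1)‖ ^ (1 / (m + 1 : ℝ))

open Topology Finset

section Doubling

variable {R : Type*} [Ring R]

theorem sda_doubling_step_pencil {E F P Q X W B C : R} (hB : B * (1 - Q * P) = 1)
    (hC : C * (1 - P * Q) = 1) (hE : E = (1 - Q * X) * W) (hX : X - P = F * X * W) :
    E * B * E = (1 - (Q + E * B * (Q * F)) * X) * (W * W) ∧
      X - (P + F * C * (P * E)) = F * C * F * X * (W * W) := by
  have hFXWW : F * X * (W * W) = (X - P) * W := by rw [hX]; noncomm_ring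
  constructor
  · calc E * B * E = E * B * ((1 - Q * X) * W) := by rw [← hE]
      _ = E * B * (((1 - Q * P) - Q * (X - P)) * W) := by noncomm_ring
      _ = E * (B * (1 - Q * P)) * W - E * B * (Q * ((X - P) * W)) := by noncomm_ring
      _ = (1 - Q * X) * W * W - E * B * (Q * (F * X * (W * W))) := by
          rw [hB, hFXWW, hE]; noncomm_ring
      _ = (1 - (Q + E * B * (Q * F)) * X) * (W * W) := by noncomm_ring
  · calc X - (P + F * C * (P * E)) = (X - P) - F * C * (P * ((1 - Q * X) * W)) := by
          rw [← hE]; noncomm_ring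
      _ = F * (C * (1 - P * Q)) * X * W - F * C * (P * ((1 - Q * X) * W)) := by
          rw [hC, mul_one, hX]
      _ = F * C * ((X - P) * W) := by noncomm_ring
      _ = F * C * F * X * (W * W) := by rw [← hFXWW]; noncomm_ring

theorem sda_iterate_pencil {E F P Q B C : ℕ → R} {X W : R}
    (hB : ∀ k, B k * (1 - Q k * P k) = 1) (hC : ∀ k, C k * (1 - P k * Q k) = 1)
    (hE : ∀ k, E (k + 1) = E k * B k * E k)
    (hP : ∀ k, P (k + 1) = P k + F k * C k * (P k * E k))
    (hF : ∀ k, F (k + 1) = F k * C k * F k)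
    (hQ : ∀ k, Q (k + 1) = Q k + E k * B k * (Q k * F k))
    (hE₀ : E 0 = (1 - Q 0 * X) * W) (hX₀ : X - P 0 = F 0 * X * W) (k : ℕ) :
    E k = (1 - Q k * X) * W ^ 2 ^ k ∧ X - P k = F k * X * W ^ 2 ^ k := by
  induction k with
  | zero => simpa using ⟨hE₀, hX₀⟩
  | succ k ih =>
    rw [hE, hP, hF, hQ, pow_succ, pow_mul, sq]
    exact sda_doubling_step_pencil (hB k) (hC k) ih.1 ih.2

end Doubling

theorem exists_norm_pow_le_mul_pow {R : Type*} [SeminormedRing R] (a : R) {t : ℝ} (ht : 0 < t)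
    {N : ℕ} (hN : 0 < N) (haN : ‖a ^ N‖ ≤ t ^ N) : ∃ C, ∀ m, ‖a ^ m‖ ≤ C * t ^ m := by
  have hdiv : ∀ q r, ‖a ^ (N * q + r)‖ ≤ t ^ (N * q) * ‖a ^ r‖ := by
    intro q r
    induction q with
    | zero => simp
    | succ q ih =>
      calc ‖a ^ (N * (q + 1) + r)‖ = ‖a ^ N * a ^ (N * q + r)‖ := by rw [← pow_add]; ring_nf
        _ ≤ ‖a ^ N‖ * ‖a ^ (N * q + r)‖ := norm_mul_le _ _
        _ ≤ t ^ N * (t ^ (N * q) * ‖a ^ r‖) := by gcongr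
        _ = t ^ (N * (q + 1)) * ‖a ^ r‖ := by ring
  refine ⟨∑ r ∈ range N, ‖a ^ r‖ / t ^ r, fun m => ?_⟩
  obtain ⟨q, r, hr, rfl⟩ : ∃ q r, r < N ∧ m = N * q + r :=
    ⟨m / N, m % N, Nat.mod_lt m hN, (Nat.div_add_mod m N).symm⟩
  calc ‖a ^ (N * q + r)‖ ≤ t ^ (N * q) * ‖a ^ r‖ := hdiv q r
    _ = ‖a ^ r‖ / t ^ r * t ^ (N * q + r) := by rw [pow_add]; field_simp
    _ ≤ (∑ r ∈ range N, ‖a ^ r‖ / t ^ r) * t ^ (N * q + r) := by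
        gcongr
        exact single_le_sum (f := fun r => ‖a ^ r‖ / t ^ r) (fun r _ => by positivity)
          (mem_range.2 hr)

theorem specRad_nonneg (M : Matrix (Fin n) (Fin n) ℝ) : 0 ≤ specRad M :=
  le_ciInf fun _ => Real.rpow_nonneg (norm_nonneg _) _

theorem exists_norm_pow_le_of_specRad_lt {M : Matrix (Fin n) (Fin n) ℝ} {t : ℝ}
    (h : specRad M < t) : ∃ C, ∀ m, ‖M ^ m‖ ≤ C * t ^ m := by
  have ht : 0 < t := (specRad_nonneg M).trans_lt h
  obtain ⟨m, hm⟩ := exists_lt_of_ciInf_lt h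
  refine exists_norm_pow_le_mul_pow M ht m.succ_pos ?_
  rw [one_div, Real.rpow_inv_lt_iff_of_pos (norm_nonneg _) ht.le (by positivity)] at hm
  exact_mod_cast hm.le

theorem limsup_rpow_inv_two_pow_le {u : ℕ → ℝ} {C s : ℝ} (hu : ∀ k, 0 ≤ u k) (hs : 0 ≤ s)
    (h : ∀ᶠ k in atTop, u k ≤ C * s ^ 2 ^ k) :
    limsup (fun k => u k ^ (1 / (2 : ℝ) ^ k)) atTop ≤ s := by
  set C' := max C 1
  have hC' : 0 < C' := lt_max_of_lt_right one_pos
  have hroot : ∀ᶠ k in atTop, u k ^ (1 / (2 : ℝ) ^ k) ≤ C' ^ (1 / (2 : ℝ) ^ k) * s := by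
    filter_upwards [h] with k hk
    calc u k ^ (1 / (2 : ℝ) ^ k) ≤ (C' * s ^ 2 ^ k) ^ (1 / (2 : ℝ) ^ k) := by
          gcongr
          · exact hu k
          · exact hk.trans (by gcongr; exact le_max_left _ _)
      _ = C' ^ (1 / (2 : ℝ) ^ k) * s := by
          rw [Real.mul_rpow hC'.le (by positivity), one_div, ← Nat.cast_ofNat, ← Nat.cast_pow,
            Real.pow_rpow_inv_natCast hs (by positivity)]
  have hlim : Tendsto (fun k => C' ^ (1 / (2 : ℝ) ^ k) * s) atTop (𝓝 s) := by
    have hexp : Tendsto (fun k : ℕ => 1 / (2 : ℝ) ^ k) atTop (𝓝 0) := by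
      simpa only [one_div, inv_pow] using
        tendsto_pow_atTop_nhds_zero_of_lt_one (r := (2 : ℝ)⁻¹) (by norm_num) (by norm_num)
    simpa using ((Real.continuousAt_const_rpow hC'.ne').tendsto.comp hexp).mul_const s
  calc limsup (fun k => u k ^ (1 / (2 : ℝ) ^ k)) atTop
      ≤ limsup (fun k => C' ^ (1 / (2 : ℝ) ^ k) * s) atTop :=
        limsup_le_limsup hroot
          (isBoundedUnder_of ⟨0, fun k => Real.rpow_nonneg (hu k) _⟩).isCoboundedUnder_le
          hlim.isBoundedUnder_le
    _ = s := hlim.limsup_eq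

theorem limsup_norm_sub_rpow_le {R : Type*} [SeminormedRing R] {x y : R} {p g : ℕ → R}
    {K s : ℝ} (hs₀ : 0 ≤ s) (hs₁ : s < 1) (hp : ∀ k, x - p k = (1 - p k * y) * g k)
    (hg : ∀ k, ‖g k‖ ≤ K * s ^ 2 ^ k) :
    limsup (fun k => ‖x - p k‖ ^ (1 / (2 : ℝ) ^ k)) atTop ≤ s := by
  have hrec : ∀ k, ‖x - p k‖ ≤ (‖1 - x * y‖ + ‖y‖ * ‖x - p k‖) * ‖g k‖ := fun k =>
    calc ‖x - p k‖ = ‖((1 - x * y) + (x - p k) * y) * g k‖ := by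
          rw [show (1 - x * y) + (x - p k) * y = 1 - p k * y by noncomm_ring, hp k]
      _ ≤ (‖1 - x * y‖ + ‖(x - p k) * y‖) * ‖g k‖ :=
          (norm_mul_le _ _).trans (by gcongr; exact norm_add_le _ _)
      _ ≤ (‖1 - x * y‖ + ‖y‖ * ‖x - p k‖) * ‖g k‖ := by
          gcongr; rw [mul_comm ‖y‖]; exact norm_mul_le _ _
  have hsmall : ∀ᶠ k in atTop, ‖y‖ * (K * s ^ 2 ^ k) ≤ 1 / 2 := by
    have hpow : Tendsto (fun k : ℕ => s ^ 2 ^ k) atTop (𝓝 0) :=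
      (tendsto_pow_atTop_nhds_zero_of_lt_one hs₀ hs₁).comp
        (tendsto_pow_atTop_atTop_of_one_lt one_lt_two)
    refine Tendsto.eventually_le_const (by norm_num : (0 : ℝ) < 1 / 2) ?_
    simpa using (hpow.const_mul K).const_mul ‖y‖
  refine limsup_rpow_inv_two_pow_le (C := 2 * ‖1 - x * y‖ * K) (fun k => norm_nonneg _) hs₀ ?_
  filter_upwards [hsmall] with k hk
  -- once `‖y‖ ‖g k‖ ≤ 1/2`, the term `‖y‖ ‖x - p k‖ ‖g k‖` is absorbed into the left side
  have h₁ := mul_le_mul_of_nonneg_left (hg k) (norm_nonneg (1 - x * y))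
  have h₂ := mul_le_mul_of_nonneg_left (hg k) (norm_nonneg y)
  nlinarith [hrec k, norm_nonneg (x - p k), mul_le_mul_of_nonneg_right h₂ (norm_nonneg (x - p k))]

theorem limsup_norm_sub_rpow_le_specRad_mul {X Y W V : Matrix (Fin n) (Fin n) ℝ}
    {P : ℕ → Matrix (Fin n) (Fin n) ℝ} (hWV : specRad W * specRad V < 1)
    (hP : ∀ k, X - P k = (1 - P k * Y) * (V ^ 2 ^ k * X * W ^ 2 ^ k)) :
    limsup (fun k => ‖X - P k‖ ^ (1 / (2 : ℝ) ^ k)) atTop ≤ specRad W * specRad V := by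
  refine le_of_forall_gt_imp_ge_of_dense fun s hs => ?_
  have hprod : Tendsto (fun ε => (specRad W + ε) * (specRad V + ε)) (𝓝[>] 0)
      (𝓝 (specRad W * specRad V)) :=
    tendsto_nhdsWithin_of_tendsto_nhds (Continuous.tendsto' (by fun_prop) 0 _ (by simp))
  obtain ⟨ε, hεs, hε⟩ :=
    ((hprod.eventually (gt_mem_nhds (lt_min hs hWV))).and self_mem_nhdsWithin).exists
  obtain ⟨C₁, hC₁⟩ := exists_norm_pow_le_of_specRad_lt (lt_add_of_pos_right (specRad W) hε)
  obtain ⟨C₂, hC₂⟩ := exists_norm_pow_le_of_specRad_lt (lt_add_of_pos_right (specRad V) hε)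
  have hg : ∀ k, ‖V ^ 2 ^ k * X * W ^ 2 ^ k‖ ≤
      C₂ * ‖X‖ * C₁ * ((specRad W + ε) * (specRad V + ε)) ^ 2 ^ k := fun k =>
    calc ‖V ^ 2 ^ k * X * W ^ 2 ^ k‖ ≤ ‖V ^ 2 ^ k‖ * ‖X‖ * ‖W ^ 2 ^ k‖ :=
          (norm_mul_le _ _).trans (by gcongr; exact norm_mul_le _ _)
      _ ≤ C₂ * (specRad V + ε) ^ 2 ^ k * ‖X‖ * (C₁ * (specRad W + ε) ^ 2 ^ k) :=
          mul_le_mul (mul_le_mul_of_nonneg_right (hC₂ _) (norm_nonneg X)) (hC₁ _) (norm_nonneg _)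
            (mul_nonneg ((norm_nonneg _).trans (hC₂ _)) (norm_nonneg X))
      _ = _ := by rw [mul_pow]; ring
  have hpos : 0 ≤ (specRad W + ε) * (specRad V + ε) := by
    have := specRad_nonneg W; have := specRad_nonneg V; positivity
  exact (limsup_norm_sub_rpow_le hpos (hεs.trans_le (min_le_right _ _)) hP hg).trans
    (hεs.trans_le (min_le_left _ _)).le

theorem sda_convergence_general
    (E F P Q X Y W V : Matrix (Fin n) (Fin n) ℝ)
    (h1 : E = (1 - Q * X) * W)
    (h2 : X - P = F * X * W)
    (h3 : E * Y * V = Y - Q)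
    (h4 : (1 - P * Y) * V = F)
    (hWV : specRad W * specRad V < 1)
    (Ek Fk Pk Qk : ℕ → Matrix (Fin n) (Fin n) ℝ)
    (hE0 : Ek 0 = E) (hF0 : Fk 0 = F) (hP0 : Pk 0 = P) (hQ0 : Qk 0 = Q)
    (hinv1 : ∀ k, IsUnit (1 - Qk k * Pk k))
    (hinv2 : ∀ k, IsUnit (1 - Pk k * Qk k))
    (hEk : ∀ k, Ek (k + 1) = Ek k * (1 - Qk k * Pk k)⁻¹ * Ek k)
    (hPk : ∀ k, Pk (k + 1) = Pk k + Fk k * (1 - Pk k * Qk k)⁻¹ * (Pk k * Ek k))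
    (hFk : ∀ k, Fk (k + 1) = Fk k * (1 - Pk k * Qk k)⁻¹ * Fk k)
    (hQk : ∀ k, Qk (k + 1) = Qk k + Ek k * (1 - Qk k * Pk k)⁻¹ * (Qk k * Fk k)) :
    limsup (fun k : ℕ => ‖X - Pk k‖ ^ (1 / (2 : ℝ) ^ k)) atTop ≤ specRad W * specRad V ∧
    limsup (fun k : ℕ => ‖Y - Qk k‖ ^ (1 / (2 : ℝ) ^ k)) atTop ≤ specRad W * specRad V := by
  subst hE0 hF0 hP0 hQ0
  have hB k : (1 - Qk k * Pk k)⁻¹ * (1 - Qk k * Pk k) = 1 :=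
    Matrix.nonsing_inv_mul _ ((Matrix.isUnit_iff_isUnit_det _).mp (hinv1 k))
  have hC k : (1 - Pk k * Qk k)⁻¹ * (1 - Pk k * Qk k) = 1 :=
    Matrix.nonsing_inv_mul _ ((Matrix.isUnit_iff_isUnit_det _).mp (hinv2 k))
  have hleft := sda_iterate_pencil hB hC hEk hPk hFk hQk h1 h2
  have hright := sda_iterate_pencil hC hB hFk hQk hEk hPk h4.symm h3.symm
  constructor
  · refine limsup_norm_sub_rpow_le_specRad_mul (Y := Y) hWV fun k => ?_
    rw [(hleft k).2, (hright k).1]; noncomm_ring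
  · rw [mul_comm]
    refine limsup_norm_sub_rpow_le_specRad_mul (Y := X) (by rwa [mul_comm]) fun k => ?_
    rw [(hright k).2, (hleft k).1]; noncomm_ring

/-- Convergence of the structure-preserving doubling algorithm (SDA): if the pencil
relations `M [I; X] = N [I; X] W` and `M [Y; I] V = N [Y; I]` hold for
`M = [[E, 0], [−P, I]]`, `N = [[I, −Q], [0, F]]` (blockwise: `E = (I − Q X) W`,
`X − P = F X W`, `E Y V = Y − Q`, `(I − P Y) V = F`), with `ρ(W) ≤ 1`, `ρ(V) ≤ 1`
and `ρ(W) ρ(V) < 1`, and if the SDA iteration can be carried out with no breakdown,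
then `limsup ‖X − P_k‖^(1/2^k) ≤ ρ(W) ρ(V)` and `limsup ‖Y − Q_k‖^(1/2^k) ≤ ρ(W) ρ(V)`. -/
theorem sda_convergence (hn : 1 ≤ n)
    (E F P Q X Y W V : Matrix (Fin n) (Fin n) ℝ)
    (h1 : E = (1 - Q * X) * W)
    (h2 : X - P = F * X * W)
    (h3 : E * Y * V = Y - Q)
    (h4 : (1 - P * Y) * V = F)
    (hW : specRad W ≤ 1) (hV : specRad V ≤ 1) (hWV : specRad W * specRad V < 1)
    (Ek Fk Pk Qk : ℕ → Matrix (Fin n) (Fin n) ℝ)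
    (hE0 : Ek 0 = E) (hF0 : Fk 0 = F) (hP0 : Pk 0 = P) (hQ0 : Qk 0 = Q)
    (hinv1 : ∀ k, IsUnit (1 - Qk k * Pk k))
    (hinv2 : ∀ k, IsUnit (1 - Pk k * Qk k))
    (hEk : ∀ k, Ek (k + 1) = Ek k * (1 - Qk k * Pk k)⁻¹ * Ek k)
    (hPk : ∀ k, Pk (k + 1) = Pk k + Fk k * (1 - Pk k * Qk k)⁻¹ * (Pk k * Ek k))
    (hFk : ∀ k, Fk (k + 1) = Fk k * (1 - Pk k * Qk k)⁻¹ * Fk k)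
    (hQk : ∀ k, Qk (k + 1) = Qk k + Ek k * (1 - Qk k * Pk k)⁻¹ * (Qk k * Fk k)) :
    limsup (fun k : ℕ => ‖X - Pk k‖ ^ (1 / (2 : ℝ) ^ k)) atTop ≤ specRad W * specRad V ∧
    limsup (fun k : ℕ => ‖Y - Qk k‖ ^ (1 / (2 : ℝ) ^ k)) atTop ≤ specRad W * specRad V :=
  sda_convergence_general E F P Q X Y W V h1 h2 h3 h4 hWV Ek Fk Pk Qk hE0 hF0 hP0 hQ0 hinv1 hinv2
    hEk hPk hFk hQk
end

section
/- Let n ≥ 1 be an integer, m = 2n, and ω = exp(2πi/m) ∈ ℂ the principal m-th root of unity. Let g : ℤ → ℝ satisfy g_j ≥ 0 for all j, with (g_j)_{j∈ℤ} summable and (j(j−1)g_j)_{j∈ℤ} summable; write g''(1) := ∑_{j∈ℤ} j(j−1)g_j. Let ĝ : ℤ → ℝ vanish outside {−n+1, …, n} and satisfy the interpolation conditions ∑_{j=−n+1}^{n} ĝ_j ω^{i j} = ∑_{j∈ℤ} g_j ω^{i j} for every i ∈ {−n+1, …, n}; write ĝ''(1) := ∑_{j=−n+1}^{n} j(j−1)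 ĝ_j. Then: g''(1) ≥ 0; g''(1) − ĝ''(1) ≥ 2n·(∑_{j ≤ −n} g_j + ∑_{j ≥ n+1} g_j); and for every j ∈ {−n+1, …, n}, 0 ≤ ĝ_j − g_j ≤ (1/(2n))·(g''(1) − ĝ''(1)). -/
/-!
Interpolation at the `2n`-th roots of unity aliases the coefficients: for `-n < j ≤ n`, `ĝ_j` is
the sum of the `g_l` over the residue class `l ≡ j (mod 2n)`, because both sides have the same
discrete Fourier transform on `ℤ/2nℤ`. Consequently
`g''(1) - ĝ''(1) = ∑_j ∑_{l ≡ j} (l(l-1) - j(j-1)) g_l`, and for `l ≡ j`, `l ≠ j`, the weight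
`l(l-1) - j(j-1) = (l-j)(l+j-1)` is at least `2n`. So `2n (ĝ_j - g_j) = 2n ∑_{l ≡ j, l ≠ j} g_l`
is at most the `j`-th summand, and summing over `j` bounds the tails `∑_{l ∉ (-n, n]} g_l`.
-/

open scoped Real

open ZMod

noncomputable def periodize (N : ℕ) (f : ℤ → ℝ) (r : ZMod N) : ℝ :=
  ∑' l : ((↑) : ℤ → ZMod N) ⁻¹' {r}, f l

lemma le_periodize {N : ℕ} {g : ℤ → ℝ} (hg : ∀ j, 0 ≤ g j) (hs : Summable g) (j : ℤ) :
    g j ≤ periodize N g j :=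
  (hs.subtype _).le_tsum (⟨j, rfl⟩ : ((↑) : ℤ → ZMod N) ⁻¹' {(j : ZMod N)}) fun l _ => hg l

section ResidueSystem

variable {N : ℕ} [NeZero N]

lemma bijOn_intCast_Icc {a b : ℤ} (hab : b + 1 = a + N) :
    Set.BijOn ((↑) : ℤ → ZMod N) (Finset.Icc a b : Set ℤ) Set.univ := by
  have hN : (0 : ℤ) < N := by exact_mod_cast Nat.pos_of_ne_zero (NeZero.ne N)
  refine ⟨Set.mapsTo_univ _ _, fun x hx y hy hxy => ?_, fun r _ => ?_⟩
  · simp only [Finset.coe_Icc, Set.mem_Icc] at hx hy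
    rw [ZMod.intCast_eq_intCast_iff_dvd_sub] at hxy
    have := Int.eq_zero_of_abs_lt_dvd hxy (by rw [abs_lt]; constructor <;> linarith)
    omega
  · refine ⟨a + ((r.cast : ℤ) - a) % N, ?_, ?_⟩
    · simp only [Finset.coe_Icc, Set.mem_Icc]
      constructor
      · linarith [Int.emod_nonneg ((r.cast : ℤ) - a) hN.ne']
      · linarith [Int.emod_lt_of_pos ((r.cast : ℤ) - a) hN]
    · push_cast [ZMod.intCast_mod]
      exact add_sub_cancel _ _

lemma tsum_eq_sum_periodize {I : Finset ℤ} (hI : Set.BijOn ((↑) : ℤ → ZMod N) I Set.univ)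
    {f : ℤ → ℝ} (hf : Summable f) : ∑' l, f l = ∑ j ∈ I, periodize N f j := by
  rw [← (hf.hasSum.tsum_fiberwise ((↑) : ℤ → ZMod N)).tsum_eq,
    tsum_fintype (L := .unconditional _)]
  exact (Finset.sum_nbij _ (fun _ _ => Finset.mem_univ _) hI.injOn
    (by simpa using hI.surjOn) fun _ _ => rfl).symm

lemma tsum_mul_stdAddChar_eq_sum_periodize {f : ℤ → ℝ} (hf : Summable f) (k : ZMod N) :
    ∑' l, (f l : ℂ) * stdAddChar (k * (l : ZMod N)) =
      ∑ r, (periodize N f r : ℂ) * stdAddChar (k * r) := by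
  have hs : Summable fun l : ℤ => (f l : ℂ) * stdAddChar (k * (l : ZMod N)) :=
    Summable.of_norm_bounded hf.norm fun l => by simp
  rw [← tsum_fintype (L := .unconditional _),
    ← (hs.hasSum.tsum_fiberwise ((↑) : ℤ → ZMod N)).tsum_eq]
  refine tsum_congr fun r => ?_
  rw [periodize, Complex.ofReal_tsum, ← tsum_mul_right]
  refine tsum_congr fun l => ?_
  rw [show ((l : ℤ) : ZMod N) = r from l.2]

lemma sum_mul_stdAddChar_eq_sum_fiberwise (I : Finset ℤ) (f : ℤ → ℝ) (k : ZMod N) :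
    ∑ j ∈ I, (f j : ℂ) * stdAddChar (k * (j : ZMod N)) =
      ∑ r, ((∑ j ∈ I with ((j : ℤ) : ZMod N) = r, f j : ℝ) : ℂ) * stdAddChar (k * r) := by
  rw [← Finset.sum_fiberwise I ((↑) : ℤ → ZMod N)]
  refine Finset.sum_congr rfl fun r _ => ?_
  push_cast
  rw [Finset.sum_mul]
  refine Finset.sum_congr rfl fun j hj => ?_
  rw [(Finset.mem_filter.mp hj).2]

lemma eq_periodize_of_sum_mul_stdAddChar_eq {I : Finset ℤ}
    (hI : Set.BijOn ((↑) : ℤ → ZMod N) I Set.univ) {g gh : ℤ → ℝ} (hg : Summable g)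
    (h : ∀ i ∈ I, ∑ j ∈ I, (gh j : ℂ) * stdAddChar (i * j : ZMod N) =
      ∑' j, (g j : ℂ) * stdAddChar (i * j : ZMod N))
    {j : ℤ} (hj : j ∈ I) : gh j = periodize N g j := by
  set A : ZMod N → ℂ := fun r => ((∑ j ∈ I with ((j : ℤ) : ZMod N) = r, gh j : ℝ) : ℂ)
  have hdft : 𝓕 A = 𝓕 (fun r => (periodize N g r : ℂ)) := funext fun k => by
    obtain ⟨i, hi, hik⟩ := hI.surjOn (Set.mem_univ (-k))
    have := h i hi
    rw [sum_mul_stdAddChar_eq_sum_fiberwise, tsum_mul_stdAddChar_eq_sum_periodize hg, hik] at this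
    simpa only [dft_apply, smul_eq_mul, mul_neg, neg_mul, mul_comm] using this
  have hfiber : {x ∈ I | ((x : ℤ) : ZMod N) = j} = {j} := by
    ext x
    simp only [Finset.mem_filter, Finset.mem_singleton]
    exact ⟨fun hx => hI.injOn hx.1 hj hx.2, by rintro rfl; exact ⟨hj, rfl⟩⟩
  simpa [A, hfiber] using congrFun (dft.injective hdft) j

lemma exp_zpow_eq_stdAddChar (k : ℤ) :
    Complex.exp (2 * π * Complex.I / N) ^ k = stdAddChar (k : ZMod N) := by
  rw [stdAddChar_coe, ← Complex.exp_int_mul]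
  ring_nf

end ResidueSystem

lemma tsum_lt_add_tsum_gt {α : Type*} [AddCommGroup α] [UniformSpace α]
    [IsUniformAddGroup α] [CompleteSpace α] [T2Space α] {f : ℤ → α} (hf : Summable f) {a b : ℤ}
    (hab : a ≤ b + 1) :
    (∑' j : {j : ℤ // j < a}, f j) + (∑' j : {j : ℤ // b < j}, f j) =
      ∑' j, f j - ∑ j ∈ Finset.Icc a b, f j := by
  have hcompl : ((Finset.Icc a b : Finset ℤ) : Set ℤ)ᶜ = Set.Iio a ∪ Set.Ioi b := by
    ext x
    simp only [Finset.coe_Icc, Set.mem_compl_iff, Set.mem_Icc, Set.mem_union, Set.mem_Iio,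
      Set.mem_Ioi]
    omega
  have hdisj : Disjoint (Set.Iio a) (Set.Ioi b) :=
    Set.disjoint_left.mpr fun x hxa hxb => by
      simp only [Set.mem_Iio, Set.mem_Ioi] at hxa hxb
      omega
  rw [← hf.sum_add_tsum_compl (s := Finset.Icc a b), add_sub_cancel_left, hcompl]
  exact (Summable.tsum_union_disjoint hdisj (hf.subtype _) (hf.subtype _)).symm

lemma mul_tsum_sub_le_tsum_mul {ι : Type*} {a c : ι → ℝ} {i₀ : ι} {m : ℝ} (ha : ∀ i, 0 ≤ a i)
    (has : Summable a) (hcas : Summable fun i => c i * a i) (hc₀ : 0 ≤ c i₀)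
    (hc : ∀ i ≠ i₀, m ≤ c i) : m * (∑' i, a i - a i₀) ≤ ∑' i, c i * a i := by
  classical
  have hsingle := hasSum_ite_eq i₀ (m * a i₀)
  suffices m * ∑' i, a i ≤ ∑' i, c i * a i + m * a i₀ by linarith
  rw [← tsum_mul_left, ← hsingle.tsum_eq, ← hcas.tsum_add hsingle.summable]
  refine (has.mul_left m).tsum_le_tsum (fun i => ?_) (hcas.add hsingle.summable)
  by_cases hi : i = i₀
  · subst hi
    simpa using mul_nonneg hc₀ (ha i)
  · simpa [hi] using mul_le_mul_of_nonneg_right (hc i hi) (ha i)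

lemma intCast_mul_sub_one_nonneg (l : ℤ) : 0 ≤ (l : ℝ) * (l - 1) := by
  have : 0 ≤ l * (l - 1) := by rcases le_or_gt l 0 with h | h <;> nlinarith
  exact_mod_cast this

lemma two_mul_le_mul_sub_one_sub_mul_sub_one {n : ℕ} {j l : ℤ}
    (hj : j ∈ Finset.Icc (-(n : ℤ) + 1) n) (hl : (l : ZMod (2 * n)) = j) (hne : l ≠ j) :
    (2 * n : ℝ) ≤ l * (l - 1) - j * (j - 1) := by
  obtain ⟨k, hk⟩ := (ZMod.intCast_eq_intCast_iff_dvd_sub _ _ _).mp hl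
  obtain ⟨hj₁, hj₂⟩ := Finset.mem_Icc.mp hj
  push_cast at hk
  obtain rfl : l = j - 2 * n * k := by linarith
  have hk0 : k ≠ 0 := by rintro rfl; simp at hne
  -- `l(l-1) - j(j-1) = 2n · k(2nk - 2j + 1)`, and `2nk - 2j + 1` has the sign of `k`
  have hpos : 1 ≤ k * (2 * n * k - 2 * j + 1) := by
    have hn : (0 : ℤ) ≤ n := Int.natCast_nonneg n
    rcases lt_or_gt_of_ne hk0 with hk' | hk'
    · have : 1 ≤ 2 * j - 1 - 2 * n * k := by nlinarith [mul_nonneg hn (by omega : 0 ≤ -k - 1)]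
      nlinarith
    · have : 1 ≤ 2 * n * k - 2 * j + 1 := by nlinarith [mul_nonneg hn (by omega : 0 ≤ k - 1)]
      nlinarith
  have : (2 * n : ℤ) ≤ (j - 2 * n * k) * (j - 2 * n * k - 1) - j * (j - 1) := by nlinarith
  exact_mod_cast this

lemma two_mul_periodize_sub_le {n : ℕ} {g : ℤ → ℝ} (hg : ∀ j, 0 ≤ g j) (hs : Summable g)
    (hs2 : Summable fun j : ℤ => (j : ℝ) * ((j : ℝ) - 1) * g j) {j : ℤ}
    (hj : j ∈ Finset.Icc (-(n : ℤ) + 1) n) :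
    2 * n * (periodize (2 * n) g j - g j) ≤
      periodize (2 * n) (fun l : ℤ => (l : ℝ) * ((l : ℝ) - 1) * g l) j -
        j * (j - 1) * periodize (2 * n) g j := by
  set F := ((↑) : ℤ → ZMod (2 * n)) ⁻¹' {(j : ZMod (2 * n))}
  have hsF : Summable fun l : F => g l := hs.subtype F
  have hs2F : Summable fun l : F => (l : ℝ) * ((l : ℝ) - 1) * g l := hs2.subtype F
  rw [periodize, periodize, ← tsum_mul_left, ← hs2F.tsum_sub (hsF.mul_left _)]
  simp_rw [← sub_mul]
  refine mul_tsum_sub_le_tsum_mul (fun l : F => hg l) hsF ?_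
    (c := fun l : F => (l : ℝ) * ((l : ℝ) - 1) - j * (j - 1)) (i₀ := ⟨j, rfl⟩)
    (sub_self _).ge fun l hl => ?_
  · simp_rw [sub_mul]
    exact hs2F.sub (hsF.mul_left _)
  · exact two_mul_le_mul_sub_one_sub_mul_sub_one hj l.2 fun h => hl (Subtype.ext h)

theorem interpolation_coefficient_bounds_general
    (n : ℕ) (hn : 1 ≤ n)
    (ω : ℂ) (hω : ω = Complex.exp (2 * π * Complex.I / (2 * n)))
    (g : ℤ → ℝ) (hgpos : ∀ j : ℤ, 0 ≤ g j)
    (hgsum : Summable g)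
    (hgsum2 : Summable fun j : ℤ => (j : ℝ) * ((j : ℝ) - 1) * g j)
    (gh : ℤ → ℝ)
    (hinterp : ∀ i ∈ Finset.Icc (-(n : ℤ) + 1) (n : ℤ),
      ∑ j ∈ Finset.Icc (-(n : ℤ) + 1) (n : ℤ), (gh j : ℂ) * ω ^ (i * j) =
        ∑' j : ℤ, (g j : ℂ) * ω ^ (i * j)) :
    0 ≤ (∑' j : ℤ, (j : ℝ) * ((j : ℝ) - 1) * g j) ∧
    (∑' j : ℤ, (j : ℝ) * ((j : ℝ) - 1) * g j) -
        (∑ j ∈ Finset.Icc (-(n : ℤ) + 1) (n : ℤ), (j : ℝ) * ((j : ℝ) - 1) * gh j) ≥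
      2 * n * ((∑' j : {j : ℤ // j < -(n : ℤ) + 1}, g j) +
        (∑' j : {j : ℤ // (n : ℤ) < j}, g j)) ∧
    ∀ j ∈ Finset.Icc (-(n : ℤ) + 1) (n : ℤ),
      0 ≤ gh j - g j ∧
      gh j - g j ≤ 1 / (2 * n) *
        ((∑' j : ℤ, (j : ℝ) * ((j : ℝ) - 1) * g j) -
          ∑ j ∈ Finset.Icc (-(n : ℤ) + 1) (n : ℤ), (j : ℝ) * ((j : ℝ) - 1) * gh j) := by
  have : NeZero (2 * n) := ⟨by omega⟩
  set I := Finset.Icc (-(n : ℤ) + 1) (n : ℤ)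
  set P := periodize (2 * n)
  have hI : Set.BijOn ((↑) : ℤ → ZMod (2 * n)) I Set.univ := bijOn_intCast_Icc (by push_cast; ring)
  have halias : ∀ j ∈ I, gh j = P g j := fun j hj =>
    eq_periodize_of_sum_mul_stdAddChar_eq hI hgsum (fun i hi => by
      simpa only [hω, ← Int.cast_mul, ← exp_zpow_eq_stdAddChar, Nat.cast_mul, Nat.cast_ofNat]
        using hinterp i hi) hj
  have hdefect : (∑' j : ℤ, (j : ℝ) * ((j : ℝ) - 1) * g j) -
      (∑ j ∈ I, (j : ℝ) * ((j : ℝ) - 1) * gh j) =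
        ∑ j ∈ I, (P (fun l : ℤ => (l : ℝ) * ((l : ℝ) - 1) * g l) j - j * (j - 1) * P g j) := by
    rw [tsum_eq_sum_periodize hI hgsum2, ← Finset.sum_sub_distrib]
    exact Finset.sum_congr rfl fun j hj => by rw [halias j hj]
  have htails : (∑' j : {j : ℤ // j < -(n : ℤ) + 1}, g j) +
      (∑' j : {j : ℤ // (n : ℤ) < j}, g j) = ∑ j ∈ I, (P g j - g j) := by
    rw [tsum_lt_add_tsum_gt hgsum (by omega), tsum_eq_sum_periodize hI hgsum,
      Finset.sum_sub_distrib]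
  have hgap : ∀ j ∈ I, 0 ≤ P g j - g j := fun j _ => sub_nonneg.mpr (le_periodize hgpos hgsum j)
  have hbound := fun j (hj : j ∈ I) => two_mul_periodize_sub_le hgpos hgsum hgsum2 hj
  refine ⟨tsum_nonneg fun j => mul_nonneg (intCast_mul_sub_one_nonneg j) (hgpos j), ?_,
    fun j hj => ?_⟩
  · rw [ge_iff_le, hdefect, htails, Finset.mul_sum]
    exact Finset.sum_le_sum hbound
  · have h2n : (0 : ℝ) < 2 * n := by positivity
    rw [halias j hj, hdefect, one_div, inv_mul_eq_div, le_div_iff₀' h2n]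
    exact ⟨hgap j hj, (hbound j hj).trans (Finset.single_le_sum
      (fun i hi => (mul_nonneg h2n.le (hgap i hi)).trans (hbound i hi)) hj)⟩

/-- Interpolation error bound (Lemma 3.1 of Bini–Meini–Meng): let `g(z) = ∑_j g_j zʲ`
have nonnegative coefficients, with `(g_j)` and `(j(j−1) g_j)` summable, and let
`gh(z) = ∑_{j=−n+1}^n gh_j zʲ` interpolate `g` at the `m = 2n` roots of unity
`ω^i`, `i = −n+1, …, n`, where `ω = exp(2πi/m)`.  Then `g''(1) ≥ 0`,
`g''(1) − gh''(1) ≥ 2n (∑_{j < −n+1} g_j + ∑_{j > n} g_j)`, and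
`0 ≤ gh_j − g_j ≤ (g''(1) − gh''(1)) / (2n)` for `j = −n+1, …, n`. -/
theorem interpolation_coefficient_bounds
    (n : ℕ) (hn : 1 ≤ n)
    (ω : ℂ) (hω : ω = Complex.exp (2 * π * Complex.I / (2 * n)))
    (g : ℤ → ℝ) (hgpos : ∀ j : ℤ, 0 ≤ g j)
    (hgsum : Summable g)
    (hgsum2 : Summable fun j : ℤ => (j : ℝ) * ((j : ℝ) - 1) * g j)
    (gh : ℤ → ℝ)
    (hsupp : ∀ j : ℤ, j ∉ Finset.Icc (-(n : ℤ) + 1) (n : ℤ) → gh j = 0)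
    (hinterp : ∀ i ∈ Finset.Icc (-(n : ℤ) + 1) (n : ℤ),
      ∑ j ∈ Finset.Icc (-(n : ℤ) + 1) (n : ℤ), (gh j : ℂ) * ω ^ (i * j) =
        ∑' j : ℤ, (g j : ℂ) * ω ^ (i * j)) :
    0 ≤ (∑' j : ℤ, (j : ℝ) * ((j : ℝ) - 1) * g j) ∧
    (∑' j : ℤ, (j : ℝ) * ((j : ℝ) - 1) * g j) -
        (∑ j ∈ Finset.Icc (-(n : ℤ) + 1) (n : ℤ), (j : ℝ) * ((j : ℝ) - 1) * gh j) ≥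
      2 * n * ((∑' j : {j : ℤ // j < -(n : ℤ) + 1}, g j) +
        (∑' j : {j : ℤ // (n : ℤ) < j}, g j)) ∧
    ∀ j ∈ Finset.Icc (-(n : ℤ) + 1) (n : ℤ),
      0 ≤ gh j - g j ∧
      gh j - g j ≤ 1 / (2 * n) *
        ((∑' j : ℤ, (j : ℝ) * ((j : ℝ) - 1) * g j) -
          ∑ j ∈ Finset.Icc (-(n : ℤ) + 1) (n : ℤ), (j : ℝ) * ((j : ℝ) - 1) * gh j) :=
  interpolation_coefficient_bounds_general n hn ω hω g hgpos hgsum hgsum2 gh hinterp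
end

section
/- Let a, b : ℤ → ℝ be absolutely summable. Then for all i, j ∈ ℕ, all of the following series converge absolutely and ∑_{k∈ℕ} a(k−i)·b(j−k) = ∑_{l∈ℤ} a(l)·b(j−i−l) − ∑_{k∈ℕ} a(−i−k−1)·b(j+k+1). -/
/-- Entrywise (0-based) form of the identity `T(a) T(b) = T(ab) − H(a⁻) H(b⁺)` for
semi-infinite Toeplitz matrices with absolutely summable symbols: for all
`i j : ℕ`, all of the series below converge absolutely and
`∑_{k ∈ ℕ} a(k−i) b(j−k) = ∑_{l ∈ ℤ} a(l) b(j−i−l) − ∑_{k ∈ ℕ} a(−i−k−1) b(j+k+1)`. -/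
theorem toeplitz_product_entrywise
    (a b : ℤ → ℝ)
    (ha : Summable fun k : ℤ => |a k|) (hb : Summable fun k : ℤ => |b k|) :
    ∀ i j : ℕ,
      (Summable fun k : ℕ => |a ((k : ℤ) - (i : ℤ)) * b ((j : ℤ) - (k : ℤ))|) ∧
      (Summable fun l : ℤ => |a l * b ((j : ℤ) - (i : ℤ) - l)|) ∧
      (Summable fun k : ℕ => |a (-(i : ℤ) - (k : ℤ) - 1) * b ((j : ℤ) + (k : ℤ) + 1)|) ∧
      (∑' k : ℕ, a ((k : ℤ) - (i : ℤ)) * b ((j : ℤ) - (k : ℤ))) =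
        (∑' l : ℤ, a l * b ((j : ℤ) - (i : ℤ) - l)) -
          ∑' k : ℕ, a (-(i : ℤ) - (k : ℤ) - 1) * b ((j : ℤ) + (k : ℤ) + 1) := by
  intro i j
  -- |b| is bounded by its tsum
  set C : ℝ := ∑' k : ℤ, |b k| with hC
  have hbC : ∀ x : ℤ, |b x| ≤ C := fun x =>
    Summable.le_tsum hb x (fun _ _ => abs_nonneg _)
  -- the ℤ-indexed shifted family is abs-summable
  have hZ : Summable fun l : ℤ => |a (l - (i : ℤ)) * b ((j : ℤ) - l)| := by
    apply Summable.of_nonneg_of_le (fun l => abs_nonneg _)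
      (fun l => ?_) (((Equiv.subRight (i : ℤ)).summable_iff.mpr ha).mul_right C)
    · rw [abs_mul]
      exact mul_le_mul_of_nonneg_left (hbC _) (abs_nonneg _)
  have h2 : Summable fun l : ℤ => |a l * b ((j : ℤ) - (i : ℤ) - l)| := by
    have := (Equiv.subRight (i : ℤ)).symm.summable_iff.mpr hZ
    refine this.congr fun l => ?_
    simp only [Function.comp, Equiv.subRight_symm_apply]
    ring_nf
  have h1 : Summable fun k : ℕ => |a ((k : ℤ) - (i : ℤ)) * b ((j : ℤ) - (k : ℤ))| :=
    hZ.comp_injective (Nat.cast_injective : Function.Injective ((↑) : ℕ → ℤ))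
  have h3 : Summable fun k : ℕ => |a (-(i : ℤ) - (k : ℤ) - 1) * b ((j : ℤ) + (k : ℤ) + 1)| := by
    have := hZ.comp_injective (fun m n h => by simpa using @Int.negSucc.inj m n (by exact_mod_cast h) : Function.Injective fun n : ℕ => (-(n + 1) : ℤ))
    refine this.congr fun n => ?_
    simp only [Function.comp]
    ring_nf
  refine ⟨h1, h2, h3, ?_⟩
  -- split the ℤ sum
  have hZ' : Summable fun l : ℤ => a (l - (i : ℤ)) * b ((j : ℤ) - l) :=
    hZ.of_abs
  have hsplit := tsum_of_nat_of_neg_add_one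
    (f := fun l : ℤ => a (l - (i : ℤ)) * b ((j : ℤ) - l))
    (hZ'.comp_injective (Nat.cast_injective : Function.Injective ((↑) : ℕ → ℤ)))
    (by
      have := hZ'.comp_injective (fun m n h => by simpa using @Int.negSucc.inj m n (by exact_mod_cast h) : Function.Injective fun n : ℕ => (-(n + 1) : ℤ))
      exact this.congr fun n => rfl)
  have hchange : (∑' l : ℤ, a l * b ((j : ℤ) - (i : ℤ) - l)) =
      ∑' l : ℤ, a (l - (i : ℤ)) * b ((j : ℤ) - l) := by
    rw [← (Equiv.subRight (i : ℤ)).tsum_eq (fun l => a l * b ((j : ℤ) - (i : ℤ) - l))]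
    refine tsum_congr fun l => ?_
    simp only [Equiv.subRight_apply]
    ring_nf
  rw [hchange, hsplit]
  have hneg : (∑' n : ℕ, a ((-(↑n + 1) : ℤ) - (i : ℤ)) * b ((j : ℤ) - (-(↑n + 1) : ℤ))) =
      ∑' k : ℕ, a (-(i : ℤ) - (k : ℤ) - 1) * b ((j : ℤ) + (k : ℤ) + 1) := by
    exact tsum_congr fun n => by ring_nf
  rw [hneg]; ring
end

section
/- Let a : ℤ → ℝ be absolutely summable and let E : ℕ → ℕ → ℝ be such that for each i ∈ ℕ the family (|E i j|)_{j∈ℕ} is summable and ∑_{j∈ℕ} |E i j| → 0 as i → ∞. Then ⨆_{i∈ℕ} ∑_{j∈ℕ} |a(j−i)| = ∑_{k∈ℤ} |a(k)|, and ∑_{k∈ℤ} |a(k)| ≤ ⨆_{i∈ℕ} ∑_{j∈ℕ} |a(j−i) + E i j|. -/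
open Filter

/-- `‖a‖_W = ‖T(a)‖_∞ ≤ ‖T(a) + E‖_∞` for a quasi-Toeplitz matrix `A = T(a) + E`
(0-based indexing, `(T(a))_{ij} = a(j−i)`, `A_{ij} = a(j−i) + E i j`), where the
symbol `a` is absolutely summable and the correction `E` has absolutely summable
rows whose sums tend to `0`:  the supremum of the absolute row sums of `T(a)`
equals `∑_{k ∈ ℤ} |a k|`, and `∑_{k ∈ ℤ} |a k|` is at most the supremum of the
absolute row sums of `A`. -/
theorem wiener_norm_eq_toeplitz_norm_le_qt_norm
    (a : ℤ → ℝ) (ha : Summable fun k : ℤ => |a k|)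
    (E : ℕ → ℕ → ℝ)
    (hErow : ∀ i : ℕ, Summable fun j : ℕ => |E i j|)
    (hElim : Tendsto (fun i : ℕ => ∑' j : ℕ, |E i j|) atTop (nhds 0)) :
    (⨆ i : ℕ, ∑' j : ℕ, |a ((j : ℤ) - (i : ℤ))|) = (∑' k : ℤ, |a k|) ∧
    (∑' k : ℤ, |a k|) ≤ ⨆ i : ℕ, ∑' j : ℕ, |a ((j : ℤ) - (i : ℤ)) + E i j| := by
  set S := ∑' k : ℤ, |a k| with hS
  have hinj : ∀ i : ℕ, Function.Injective (fun j : ℕ => (j : ℤ) - (i : ℤ)) := by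
    intro i j j' h; simpa using h
  have hfs : ∀ i : ℕ, Summable (fun j : ℕ => |a ((j : ℤ) - (i : ℤ))|) := fun i =>
    ha.comp_injective (hinj i)
  set f := fun i : ℕ => ∑' j : ℕ, |a ((j : ℤ) - (i : ℤ))| with hf
  have hfle : ∀ i, f i ≤ S := by
    intro i
    exact Summable.tsum_le_tsum_of_inj _ (hinj i) (fun c _ => abs_nonneg _) (fun b => le_rfl)
      (hfs i) ha
  -- key approximation lemma
  have key : ∀ ε > (0:ℝ), ∃ i0 : ℕ, ∀ i ≥ i0, S - ε ≤ f i := by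
    intro ε hε
    have hev : ∀ᶠ F : Finset ℤ in atTop, S - ε < ∑ k ∈ F, |a k| :=
      ha.hasSum.eventually (eventually_gt_nhds (by linarith))
    obtain ⟨F, hF⟩ := hev.exists
    refine ⟨F.sum (fun k => (-k).toNat), fun i hi => ?_⟩
    have hFk : ∀ k ∈ F, -(i:ℤ) ≤ k := by
      intro k hk
      have h1 : (-k).toNat ≤ F.sum (fun k => (-k).toNat) :=
        Finset.single_le_sum (f := fun k => (-k).toNat) (fun _ _ => Nat.zero_le _) hk
      have h2 : (-k : ℤ) ≤ (-k).toNat := Int.self_le_toNat _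
      have h3 : ((-k).toNat : ℤ) ≤ (i : ℤ) := by exact_mod_cast le_trans h1 hi
      linarith
    have hsum : ∑ k ∈ F, |a k| ≤ f i := by
      have hmap : ∑ k ∈ F, |a k| =
          ∑ j ∈ F.image (fun k => (k + (i:ℤ)).toNat), |a ((j:ℤ) - (i:ℤ))| := by
        rw [Finset.sum_image]
        · apply Finset.sum_congr rfl
          intro k hk
          have : ((k + (i:ℤ)).toNat : ℤ) = k + i :=
            Int.toNat_of_nonneg (by linarith [hFk k hk])
          rw [this]
          ring_nf
        · intro k hk k' hk' h
          have e1 : ((k + (i:ℤ)).toNat : ℤ) = k + i :=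
            Int.toNat_of_nonneg (by linarith [hFk k hk])
          have e2 : ((k' + (i:ℤ)).toNat : ℤ) = k' + i :=
            Int.toNat_of_nonneg (by linarith [hFk k' hk'])
          have e3 : ((k + (i:ℤ)).toNat : ℤ) = ((k' + (i:ℤ)).toNat : ℤ) := by
            exact_mod_cast h
          omega
      rw [hmap]
      exact Summable.sum_le_tsum _ (fun _ _ => abs_nonneg _) (hfs i)
    linarith
  have hbddf : BddAbove (Set.range f) := ⟨S, by rintro x ⟨i, rfl⟩; exact hfle i⟩
  have hSlef : S ≤ ⨆ i, f i := by
    refine le_of_forall_pos_le_add fun ε hε => ?_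
    obtain ⟨i0, hi0⟩ := key ε hε
    have h1 : S ≤ f i0 + ε := by linarith [hi0 i0 le_rfl]
    have h2 : f i0 ≤ ⨆ i, f i := le_ciSup hbddf i0
    linarith
  refine ⟨le_antisymm (ciSup_le hfle) hSlef, ?_⟩
  -- part 2
  set t := fun i : ℕ => ∑' j : ℕ, |E i j| with ht
  set g := fun i : ℕ => ∑' j : ℕ, |a ((j : ℤ) - (i : ℤ)) + E i j| with hg
  have hgs : ∀ i : ℕ, Summable (fun j : ℕ => |a ((j : ℤ) - (i : ℤ)) + E i j|) := by
    intro i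
    refine Summable.of_nonneg_of_le (fun j => abs_nonneg _) (fun j => abs_add_le _ _)
      ((hfs i).add (hErow i))
  have htnn : ∀ i, 0 ≤ t i := fun i => tsum_nonneg fun j => abs_nonneg _
  have hfgt : ∀ i, f i ≤ g i + t i := by
    intro i
    have h1 : f i ≤ ∑' j : ℕ, (|a ((j : ℤ) - (i : ℤ)) + E i j| + |E i j|) := by
      refine Summable.tsum_le_tsum (fun j => ?_) (hfs i) ((hgs i).add (hErow i))
      calc |a ((j : ℤ) - (i : ℤ))| = |(a ((j : ℤ) - (i : ℤ)) + E i j) + (-(E i j))| := by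
            ring_nf
        _ ≤ |a ((j : ℤ) - (i : ℤ)) + E i j| + |(-(E i j))| := abs_add_le _ _
        _ = |a ((j : ℤ) - (i : ℤ)) + E i j| + |E i j| := by rw [abs_neg]
    rwa [Summable.tsum_add (hgs i) (hErow i)] at h1
  have hgft : ∀ i, g i ≤ f i + t i := by
    intro i
    have h1 : g i ≤ ∑' j : ℕ, (|a ((j : ℤ) - (i : ℤ))| + |E i j|) :=
      Summable.tsum_le_tsum (fun j => abs_add_le _ _) (hgs i) ((hfs i).add (hErow i))
    rwa [Summable.tsum_add (hfs i) (hErow i)] at h1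
  obtain ⟨C, hC⟩ : ∃ C : ℝ, ∀ i, t i ≤ C := by
    obtain ⟨C, hC⟩ := hElim.bddAbove_range
    exact ⟨C, fun i => hC ⟨i, rfl⟩⟩
  have hbddg : BddAbove (Set.range g) := by
    refine ⟨S + C, ?_⟩
    rintro x ⟨i, rfl⟩
    have := hgft i
    have := hfle i
    have := hC i
    linarith
  refine le_of_forall_pos_le_add fun ε hε => ?_
  obtain ⟨i0, hi0⟩ := key (ε/2) (by linarith)
  have hev : ∀ᶠ i in atTop, t i < ε/2 :=
    hElim.eventually (eventually_lt_nhds (by linarith))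
  obtain ⟨i, hti, hii⟩ := (hev.and (eventually_ge_atTop i0)).exists
  have h1 : S - ε/2 ≤ f i := hi0 i hii
  have h2 : f i ≤ g i + t i := hfgt i
  have h3 : g i ≤ ⨆ i, g i := le_ciSup hbddg i
  linarith
end

section
/- Let a : ℤ → ℝ be absolutely summable and let E : ℕ → ℕ → ℝ be such that for each i ∈ ℕ the family (|E i j|)_{j∈ℕ} is summable and ∑_{j∈ℕ} |E i j| → 0 as i → ∞. If a(j−i) + E i j ≥ 0 for all i, j ∈ ℕ, then a(k) ≥ 0 for every k ∈ ℤ. -/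
open Filter

/-- If a quasi-Toeplitz matrix `A = T(a) + E` (0-based indexing,
`A_{ij} = a(j−i) + E i j`) is entrywise nonnegative, where the symbol `a` is
absolutely summable and the correction `E` has absolutely summable rows whose
sums tend to `0`, then the Toeplitz part is entrywise nonnegative, i.e.
`a k ≥ 0` for every `k : ℤ`. -/
theorem toeplitz_part_nonneg
    (a : ℤ → ℝ) (ha : Summable fun k : ℤ => |a k|)
    (E : ℕ → ℕ → ℝ)
    (hErow : ∀ i : ℕ, Summable fun j : ℕ => |E i j|)
    (hElim : Tendsto (fun i : ℕ => ∑' j : ℕ, |E i j|) atTop (nhds 0))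
    (hpos : ∀ i j : ℕ, 0 ≤ a ((j : ℤ) - (i : ℤ)) + E i j) :
    ∀ k : ℤ, 0 ≤ a k := by
  intro k
  have key : -a k ≤ 0 := by
    apply ge_of_tendsto hElim
    filter_upwards [eventually_ge_atTop k.natAbs] with i hi
    set j : ℕ := (i + k).toNat with hj
    have hik : (0 : ℤ) ≤ i + k := by
      have : (k.natAbs : ℤ) ≤ i := by exact_mod_cast hi
      omega
    have hjk : (j : ℤ) - i = k := by
      rw [hj, Int.toNat_of_nonneg hik]; ring
    have h1 := hpos i j
    rw [hjk] at h1
    have h2 : -a k ≤ E i j := by linarith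
    calc -a k ≤ |E i j| := h2.trans (le_abs_self _)
      _ ≤ ∑' j : ℕ, |E i j| := Summable.le_tsum (hErow i) j (fun _ _ => abs_nonneg _)
  linarith
end
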